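/- The embedding ι: Wⱼ → Wⱼ ⊗ ℂ³ defined by ι(φ) = -((2j+1)(2j+3))^{-1/2} Σᵢ πⱼ(σᵢ)φ ⊗ eᵢ preserves the Hermitian inner product. -/

import Mathlib

open scoped ComplexInnerProductSpace InnerProductSpace

/-! Skew-adjointness turns `⟪Aᵢ φ, Aᵢ ψ⟫` into `-⟪φ, Aᵢ² ψ⟫`; summed over `i`, the Casimir
identity makes this `(2j+1)(2j+3) ⟪φ, ψ⟫`, which the normalising factor cancels. -/

section SkewAdjoint

variable {𝕜 E : Type*} [RCLike 𝕜] [NormedAddCommGroup E] [InnerProductSpace 𝕜 E]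
  [FiniteDimensional 𝕜 E]

theorem LinearMap.inner_apply_apply_of_adjoint_eq_neg {T : E →ₗ[𝕜] E}
    (hT : LinearMap.adjoint T = -T) (x y : E) :
    ⟪T x, T y⟫_𝕜 = -⟪x, T (T y)⟫_𝕜 := by
  rw [← LinearMap.adjoint_inner_right, hT, LinearMap.neg_apply, inner_neg_right]

theorem inner_toLp_apply_of_adjoint_eq_neg {ι : Type*} [Fintype ι] (A : ι → E →ₗ[𝕜] E)
    (hskew : ∀ i, LinearMap.adjoint (A i) = -A i) (x y : E) :
    ⟪WithLp.toLp 2 (fun i => A i x), WithLp.toLp 2 (fun i => A i y)⟫_𝕜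
      = -⟪x, (∑ i, A i ∘ₗ A i) y⟫_𝕜 := by
  simp only [PiLp.inner_apply, (A _).inner_apply_apply_of_adjoint_eq_neg (hskew _),
    Finset.sum_neg_distrib, LinearMap.sum_apply, LinearMap.comp_apply, inner_sum]

end SkewAdjoint

section Casimir

variable {E : Type*} [NormedAddCommGroup E] [InnerProductSpace ℂ E] [FiniteDimensional ℂ E]

theorem inner_toLp_neg_inv_sqrt_smul_apply {ι : Type*} [Fintype ι] (A : ι → E →ₗ[ℂ] E)
    (hskew : ∀ i, LinearMap.adjoint (A i) = -A i) {c : ℝ} (hc : 0 < c)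
    (hcas : ∑ i, A i ∘ₗ A i = (-(c : ℂ)) • LinearMap.id) (x y : E) :
    ⟪WithLp.toLp 2 (fun i => -(((Real.sqrt c)⁻¹ : ℝ) : ℂ) • A i x),
      WithLp.toLp 2 (fun i => -(((Real.sqrt c)⁻¹ : ℝ) : ℂ) • A i y)⟫ = ⟪x, y⟫ := by
  have hscale : (((Real.sqrt c)⁻¹ : ℝ) : ℂ) * (((Real.sqrt c)⁻¹ : ℝ) : ℂ) * c = 1 := by
    norm_cast
    rw [← mul_inv, Real.mul_self_sqrt hc.le, inv_mul_cancel₀ hc.ne']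
  simp only [← Pi.smul_def, WithLp.toLp_smul, inner_smul_left, inner_smul_right,
    inner_toLp_apply_of_adjoint_eq_neg A hskew, hcas, LinearMap.smul_apply, LinearMap.id_apply,
    map_neg, Complex.conj_ofReal]
  linear_combination ⟪x, y⟫_ℂ * hscale

end Casimir

/-- `Wⱼ ⊗ ℂ³` is modelled as `PiLp 2 (Fin 3 → Wⱼ)` and `A i` stands for `πⱼ(σᵢ)`. -/
theorem embedding_isometric (j : ℕ) (W : Type*) [NormedAddCommGroup W]
    [InnerProductSpace ℂ W] [FiniteDimensional ℂ W]
    (A : Fin 3 → W →ₗ[ℂ] W)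
    (hskew : ∀ i, LinearMap.adjoint (A i) = -A i)
    (hcas : A 0 ∘ₗ A 0 + A 1 ∘ₗ A 1 + A 2 ∘ₗ A 2
      = (-((2 * (j : ℂ) + 1) * (2 * (j : ℂ) + 3))) • LinearMap.id)
    (ι : W → PiLp 2 fun _ : Fin 3 => W)
    (hι : ∀ φ, ι φ = (WithLp.equiv 2 (∀ _ : Fin 3, W)).symm
      (fun i => (-((Real.sqrt ((2 * (j : ℝ) + 1) * (2 * (j : ℝ) + 3)))⁻¹ : ℝ) : ℂ) • A i φ)) :
    ∀ φ ψ : W, ⟪ι φ, ι ψ⟫ = ⟪φ, ψ⟫ := by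
  intro φ ψ
  have hc : (0 : ℝ) < (2 * j + 1) * (2 * j + 3) := by positivity
  have hsum : ∑ i, A i ∘ₗ A i = (-(((2 * j + 1) * (2 * j + 3) : ℝ) : ℂ)) • LinearMap.id := by
    rw [Fin.sum_univ_three, hcas]
    push_cast
    rfl
  rw [hι, hι]
  exact inner_toLp_neg_inv_sqrt_smul_apply A hskew hc hsum φ ψ
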